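/- Let (L_{k,j})_{k≥1, j≥1} be a doubly indexed family of independent, identically distributed nonnegative real random variables with common cumulative distribution function F, and let F^{(−1)}(q) := inf{t ∈ ℝ : F(t) ≥ q}. Let (b_k)_{k≥1} be positive integers growing double-exponentially, i.e. there are constants b₁, b₂ > 0 and 1 < c₁ ≤ c₂ such that exp(b₁·c₁^k) ≤ b_k ≤ exp(b₂·c₂^k) for all k ≥ 1. Then ∑_{k=1}^∞ min_{1≤j≤b_k} L_{k,j} < ∞ almost surely if and only if ∫_0^∞ F^{(−1)}(exp(−e^y)) dy < ∞. -/

import Mathlib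

open MeasureTheory ProbabilityTheory Filter
open Set Real

/-!
Let `M k` be the minimum of the `k`-th block and `g y = F⁻¹ (exp (-exp y))`, an antitone function.
The `M k` are independent, and a series of independent `[0, 1]`-valued variables converges a.s. iff
the series of their means does: one way by monotone convergence, the other because
`E[exp (-∑_{k<n} X k)] = ∏_{k<n} E[exp (-X k)] ≤ exp (-(1 - e⁻¹) ∑_{k<n} E[X k])`.
Since `P(M k > t) = (1 - F t) ^ b k`, the mean `E[min (M k) 1]` is at most `g (log log b k - log 2)`
plus a summable error, and at least `min (g (log log b k + log 2)) 1 / 2`. Double-exponential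
growth makes `log log b k` grow linearly in `k`, so by the integral test both sums are finite iff
`∫₀^∞ g < ∞`.
-/

-- Meaningful for `0 < q < 1`; otherwise the set is empty or unbounded below and `sInf` gives `0`.
noncomputable def quantile (ν : Measure ℝ) (q : ℝ) : ℝ :=
  sInf {t | q ≤ cdf ν t}

section Quantile

variable {ν : Measure ℝ} {q q' t : ℝ}

lemma bddBelow_setOf_le_cdf (hq : 0 < q) : BddBelow {t | q ≤ cdf ν t} := by
  obtain ⟨t₀, ht₀⟩ := ((tendsto_cdf_atBot ν).eventually (gt_mem_nhds hq)).exists_forall_of_atBot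
  exact ⟨t₀, fun t ht => le_of_not_gt fun htt => (ht₀ t htt.le).not_ge ht⟩

lemma nonempty_setOf_le_cdf (hq : q < 1) : {t | q ≤ cdf ν t}.Nonempty :=
  ((tendsto_cdf_atTop ν).eventually (le_mem_nhds hq)).exists

lemma cdf_lt_of_lt_quantile (hq : 0 < q) (ht : t < quantile ν q) : cdf ν t < q :=
  lt_of_not_ge fun h => ht.not_ge (csInf_le (bddBelow_setOf_le_cdf hq) h)

lemma le_cdf_quantile (hq : 0 < q) (hq1 : q < 1) : q ≤ cdf ν (quantile ν q) := by
  set S := {t | q ≤ cdf ν t}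
  have hS : S ⊆ Ici (quantile ν q) := fun t ht => csInf_le (bddBelow_setOf_le_cdf hq) ht
  have hmem : cdf ν (quantile ν q) ∈ closure (cdf ν '' S) :=
    ((cdf ν).right_continuous _).mono hS |>.mem_closure_image
      (csInf_mem_closure (nonempty_setOf_le_cdf hq1) (bddBelow_setOf_le_cdf hq))
  exact closure_minimal (image_subset_iff.2 fun t ht => ht) isClosed_Ici hmem

lemma quantile_mono (hq : 0 < q) (hq' : q' < 1) (h : q ≤ q') : quantile ν q ≤ quantile ν q' :=
  csInf_le_csInf (bddBelow_setOf_le_cdf hq) (nonempty_setOf_le_cdf hq') fun _ ht => h.trans ht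

lemma quantile_nonneg [IsProbabilityMeasure ν] (hν : ν (Iio 0) = 0) (hq : 0 < q) (hq1 : q < 1) :
    0 ≤ quantile ν q := by
  refine le_csInf (nonempty_setOf_le_cdf hq1) fun t ht => le_of_not_gt fun ht0 => ?_
  have : cdf ν t = 0 := by
    rw [cdf_eq_real, measureReal_eq_zero_iff]
    exact measure_mono_null (Iic_subset_Iio.2 ht0) hν
  exact (ht.trans_eq this).not_gt hq

end Quantile

lemma summable_min_one_iff {ι : Type*} {f : ι → ℝ} (hf : ∀ k, 0 ≤ f k) :
    Summable (fun k => min (f k) 1) ↔ Summable f :=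
  ⟨fun h => h.congr_cofinite <| (h.tendsto_cofinite_zero.eventually (gt_mem_nhds one_pos)).mono
    fun _ hk => min_eq_left (min_lt_iff.1 hk |>.resolve_right (lt_irrefl 1)).le,
   fun h => h.of_nonneg_of_le (fun k => le_min (hf k) zero_le_one) fun _ => min_le_left _ _⟩

namespace Antitone

variable {g : ℝ → ℝ}

lemma integrableOn_Ioi_iff_of_le (hg : Antitone g) {a b : ℝ} (hab : a ≤ b) :
    IntegrableOn g (Ioi a) ↔ IntegrableOn g (Ioi b) := by
  rw [← Ioc_union_Ioi_eq_Ioi hab, integrableOn_union,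
    and_iff_right ((hg.locallyIntegrable.integrableOn_isCompact isCompact_Icc).mono_set
      Ioc_subset_Icc_self)]

lemma integrableOn_Ioi_iff_summable (hg : Antitone g) (hg0 : ∀ y, 0 ≤ g y) (a b : ℝ) {δ : ℝ}
    (hδ : 0 < δ) : IntegrableOn g (Ioi b) ↔ Summable fun n : ℕ => g (a + δ * n) := by
  have hanti : AntitoneOn (fun x => g (a + δ * x)) (Ici 0) := fun x _ y _ hxy =>
    hg (by gcongr)
  have htrans : IntegrableOn (fun y => g (a + y)) (Ioi 0) ↔ IntegrableOn g (Ioi a) := by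
    simpa [Function.comp_def] using
      (measurePreserving_add_left volume a).integrableOn_comp_preimage
        (measurableEmbedding_addLeft a) (f := g) (s := Ioi a)
  rw [← hg.integrableOn_Ioi_iff_of_le (min_le_right a b),
    hg.integrableOn_Ioi_iff_of_le (min_le_left a b), ← htrans, ← mul_zero δ,
    ← integrableOn_Ioi_comp_mul_left_iff _ 0 hδ]
  exact ⟨fun h => hanti.summable_of_integrableOn_Ioi_zero h fun _ _ => hg0 _,
    fun h => hanti.integrableOn_Ioi_zero_of_summable h fun _ _ => hg0 _⟩

end Antitone

section DoublyExponential

variable {ν : Measure ℝ} {n : ℕ → ℕ} {E : ℕ → ℝ} {a δ : ℝ}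

lemma exp_neg_exp_lt_one (y : ℝ) : exp (-exp y) < 1 :=
  Real.exp_lt_one_iff.2 (neg_neg_of_pos (Real.exp_pos y))

lemma antitone_quantile_exp_neg_exp : Antitone fun y => quantile ν (exp (-exp y)) :=
  fun _ _ h => quantile_mono (Real.exp_pos _) (exp_neg_exp_lt_one _) (by gcongr)

lemma quantile_exp_neg_exp_nonneg [IsProbabilityMeasure ν] (hν : ν (Iio 0) = 0) (y : ℝ) :
    0 ≤ quantile ν (exp (-exp y)) :=
  quantile_nonneg hν (Real.exp_pos _) (exp_neg_exp_lt_one y)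

lemma summable_of_integrableOn_quantile [IsProbabilityMeasure ν] (hν : ν (Iio 0) = 0)
    (hE0 : ∀ k, 0 ≤ E k)
    (hE : ∀ k (q : ℝ), 0 < q → q < 1 → E k ≤ quantile ν q + exp (-(n k * q)))
    (hδ : 0 < δ) (hn : ∀ k : ℕ, exp (a + δ * k) ≤ log (n k))
    (hint : IntegrableOn (fun y => quantile ν (exp (-exp y))) (Ioi 0)) :
    Summable E := by
  set g := fun y => quantile ν (exp (-exp y))
  set ℓ := fun k => log (n k)
  have hℓ (k : ℕ) : 0 < ℓ k := (Real.exp_pos _).trans_le (hn k)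
  have hn1 (k : ℕ) : (1 : ℝ) < n k := (Real.log_pos_iff (Nat.cast_nonneg _)).1 (hℓ k)
  -- at the level `q = 1 / √(n k)` the error term `exp (-n k q) = exp (-√(n k))` is negligible
  have hbound (k : ℕ) : E k ≤ g (log (ℓ k / 2)) + exp (-(ℓ k / 2)) := by
    have hsqrt : (n k : ℝ) * exp (-(ℓ k / 2)) = exp (ℓ k / 2) := by
      rw [show (n k : ℝ) = exp (ℓ k) from (Real.exp_log (zero_lt_one.trans (hn1 k))).symm,
        ← Real.exp_add]
      ring_nf
    calc E k ≤ quantile ν (exp (-(ℓ k / 2))) + exp (-(n k * exp (-(ℓ k / 2)))) :=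
          hE k _ (Real.exp_pos _) (Real.exp_lt_one_iff.2 (by linarith [hℓ k]))
      _ ≤ g (log (ℓ k / 2)) + exp (-(ℓ k / 2)) := by
          simp only [g, Real.exp_log (half_pos (hℓ k)), hsqrt]
          gcongr
          linarith [Real.add_one_le_exp (ℓ k / 2)]
  have hmain : Summable fun k => g (log (ℓ k / 2)) := by
    refine ((antitone_quantile_exp_neg_exp.integrableOn_Ioi_iff_summable
      (quantile_exp_neg_exp_nonneg hν) (a - log 2) 0 hδ).1 hint).of_nonneg_of_le
      (fun k => quantile_exp_neg_exp_nonneg hν _) fun k => antitone_quantile_exp_neg_exp ?_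
    rw [Real.log_div (hℓ k).ne' two_ne_zero, sub_add_eq_add_sub]
    gcongr
    exact (Real.le_log_iff_exp_le (hℓ k)).2 (hn k)
  have herror : Summable fun k => exp (-(ℓ k / 2)) := by
    refine ((summable_geometric_of_lt_one (Real.exp_pos (-δ / 2)).le
      (Real.exp_lt_one_iff.2 (by linarith))).mul_left (exp (-(a + 1) / 2))).of_nonneg_of_le
      (fun k => (Real.exp_pos _).le) fun k => ?_
    rw [← Real.exp_nat_mul, ← Real.exp_add, Real.exp_le_exp]
    linarith [hn k, Real.add_one_le_exp (a + δ * k)]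
  exact (hmain.add herror).of_nonneg_of_le hE0 hbound

lemma integrableOn_quantile_of_summable [IsProbabilityMeasure ν] (hν : ν (Iio 0) = 0)
    (hE : ∀ k (q : ℝ), 0 < q → n k * q ≤ 1 / 2 → min (quantile ν q) 1 ≤ 2 * E k)
    (hn2 : ∀ k, 2 ≤ n k) (hδ : 0 < δ) (hn : ∀ k : ℕ, log (n k) ≤ exp (a + δ * k))
    (hsum : Summable E) :
    IntegrableOn (fun y => quantile ν (exp (-exp y))) (Ioi 0) := by
  set g := fun y => quantile ν (exp (-exp y))
  set ℓ := fun k => log (n k)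
  have hn2' (k : ℕ) : (2 : ℝ) ≤ n k := by exact_mod_cast hn2 k
  have hℓ (k : ℕ) : 0 < ℓ k := Real.log_pos (by linarith [hn2' k])
  -- at the level `q = 1 / (n k) ^ 2` the block minimum exceeds the quantile w.p. at least `1 / 2`
  have hmin (k : ℕ) : min (g (log (2 * ℓ k))) 1 ≤ 2 * E k := by
    have hq : (n k : ℝ) * exp (-(2 * ℓ k)) ≤ 1 / 2 := by
      rw [show (n k : ℝ) = exp (ℓ k) from (Real.exp_log (by linarith [hn2' k])).symm,
        ← Real.exp_add, show ℓ k + -(2 * ℓ k) = -ℓ k by ring, Real.exp_neg,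
        Real.exp_log (by linarith [hn2' k]), one_div]
      exact inv_anti₀ two_pos (hn2' k)
    simpa only [g, Real.exp_log (mul_pos two_pos (hℓ k))] using hE k _ (Real.exp_pos _) hq
  have hgrid : Summable fun k : ℕ => min (g (log 2 + a + δ * k)) 1 := by
    refine (hsum.mul_left 2).of_nonneg_of_le
      (fun k => le_min (quantile_exp_neg_exp_nonneg hν _) zero_le_one)
      fun k => (min_le_min_right 1 (antitone_quantile_exp_neg_exp ?_)).trans (hmin k)
    rw [Real.log_mul two_ne_zero (hℓ k).ne', add_assoc]
    gcongr
    exact (Real.log_le_iff_le_exp (hℓ k)).2 (hn k)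
  exact (antitone_quantile_exp_neg_exp.integrableOn_Ioi_iff_summable
    (quantile_exp_neg_exp_nonneg hν) _ 0 hδ).2
    ((summable_min_one_iff fun _ => quantile_exp_neg_exp_nonneg hν _).1 hgrid)

lemma lintegral_quantile_exp_neg_exp_lt_top_iff [IsProbabilityMeasure ν] (hν : ν (Iio 0) = 0) :
    (∫⁻ y in Ici 0, ENNReal.ofReal (quantile ν (exp (-exp y)))) < ⊤ ↔
      IntegrableOn (fun y => quantile ν (exp (-exp y))) (Ioi 0) := by
  rw [lt_top_iff_ne_top, lintegral_ofReal_ne_top_iff_integrable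
    antitone_quantile_exp_neg_exp.measurable.aestronglyMeasurable
    (ae_of_all _ (quantile_exp_neg_exp_nonneg hν))]
  exact integrableOn_Ici_iff_integrableOn_Ioi

end DoublyExponential

lemma Real.exp_neg_le_one_sub_mul {x : ℝ} (hx0 : 0 ≤ x) (hx1 : x ≤ 1) :
    exp (-x) ≤ 1 - (1 - exp (-1)) * x := by
  have := convexOn_exp.2 (mem_univ 0) (mem_univ (-1)) (sub_nonneg.2 hx1) hx0 (sub_add_cancel 1 x)
  simp only [smul_eq_mul, mul_zero, zero_add, mul_neg, mul_one, Real.exp_zero] at this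
  linarith

section MinOne

variable {Ω : Type*} [MeasurableSpace Ω] {μ : Measure Ω} [IsProbabilityMeasure μ] {X : Ω → ℝ}

lemma integrable_min_one (hX : Measurable X) (h0 : ∀ ω, 0 ≤ X ω) :
    Integrable (fun ω => min (X ω) 1) μ :=
  .of_mem_Icc 0 1 (by fun_prop) (ae_of_all _ fun ω => ⟨le_min (h0 ω) zero_le_one, min_le_right _ _⟩)

lemma integral_min_one_le (hX : Measurable X) (h0 : ∀ ω, 0 ≤ X ω) {s : ℝ} (hs : 0 ≤ s) :
    ∫ ω, min (X ω) 1 ∂μ ≤ s + μ.real {ω | s < X ω} := by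
  have hset : MeasurableSet {ω | s < X ω} := measurableSet_lt measurable_const hX
  calc ∫ ω, min (X ω) 1 ∂μ ≤ ∫ ω, (s + {ω | s < X ω}.indicator (fun _ => 1) ω) ∂μ := by
        refine integral_mono (integrable_min_one hX h0)
          ((integrable_const s).add ((integrable_const 1).indicator hset)) fun ω => ?_
        by_cases hω : s < X ω
        · simp [hω, hs]
        · simp [hω, not_lt.1 hω]
    _ = s + μ.real {ω | s < X ω} := by
        rw [integral_add (integrable_const s) ((integrable_const 1).indicator hset),
          integral_indicator_const _ hset]
        simp

lemma min_mul_measureReal_le_integral_min_one (hX : Measurable X) (h0 : ∀ ω, 0 ≤ X ω) (s : ℝ) :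
    min s 1 * μ.real {ω | s < X ω} ≤ ∫ ω, min (X ω) 1 ∂μ := by
  have hset : MeasurableSet {ω | s < X ω} := measurableSet_lt measurable_const hX
  calc min s 1 * μ.real {ω | s < X ω} = ∫ ω, {ω | s < X ω}.indicator (fun _ => min s 1) ω ∂μ := by
        rw [integral_indicator_const _ hset, smul_eq_mul, mul_comm]
    _ ≤ ∫ ω, min (X ω) 1 ∂μ := by
        refine integral_mono ((integrable_const _).indicator hset) (integrable_min_one hX h0)
          fun ω => ?_
        by_cases hω : s < X ω
        · simpa [indicator_apply, hω] using min_le_min_right 1 hω.le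
        · simp [hω, h0 ω]

variable {ν : Measure ℝ} {n : ℕ} {q : ℝ}

lemma integral_min_one_le_quantile_add [IsProbabilityMeasure ν] (hX : Measurable X)
    (h0 : ∀ ω, 0 ≤ X ω) (htail : ∀ t, μ.real {ω | t < X ω} = (1 - cdf ν t) ^ n)
    (hν : ν (Iio 0) = 0) (hq0 : 0 < q) (hq1 : q < 1) :
    ∫ ω, min (X ω) 1 ∂μ ≤ quantile ν q + exp (-(n * q)) := by
  calc ∫ ω, min (X ω) 1 ∂μ ≤ quantile ν q + (1 - cdf ν (quantile ν q)) ^ n :=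
        htail _ ▸ integral_min_one_le hX h0 (quantile_nonneg hν hq0 hq1)
    _ ≤ quantile ν q + exp (-q) ^ n := by
        have := le_cdf_quantile (ν := ν) hq0 hq1
        gcongr
        · linarith [cdf_le_one ν (quantile ν q)]
        · linarith [Real.add_one_le_exp (-q)]
    _ = quantile ν q + exp (-(n * q)) := by rw [← Real.exp_nat_mul, mul_neg]

lemma min_quantile_one_le_two_mul_integral (hX : Measurable X) (h0 : ∀ ω, 0 ≤ X ω)
    (htail : ∀ t, μ.real {ω | t < X ω} = (1 - cdf ν t) ^ n) (hq0 : 0 < q) (hnq : n * q ≤ 1 / 2) :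
    min (quantile ν q) 1 ≤ 2 * ∫ ω, min (X ω) 1 ∂μ := by
  refine le_of_forall_lt_imp_le_of_dense fun s hs => ?_
  have hE := min_mul_measureReal_le_integral_min_one (μ := μ) hX h0 s
  rcases le_or_gt s 0 with hs0 | hs0
  · linarith [integral_nonneg (μ := μ) (f := fun ω => min (X ω) 1)
      fun ω => le_min (h0 ω) zero_le_one]
  have hF := cdf_lt_of_lt_quantile hq0 (hs.trans_le (min_le_left _ _))
  have hhalf : 1 / 2 ≤ (1 - cdf ν s) ^ n := by
    have := one_add_mul_le_pow (by linarith [cdf_le_one ν s] : (-2 : ℝ) ≤ -cdf ν s) n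
    rw [← sub_eq_add_neg] at this
    nlinarith [mul_le_mul_of_nonneg_left hF.le (Nat.cast_nonneg (α := ℝ) n)]
  rw [htail, min_eq_left (hs.trans_le (min_le_right _ _)).le] at hE
  nlinarith

end MinOne

section UnitIntervalSeries

variable {Ω : Type*} [MeasurableSpace Ω] {μ : Measure Ω} {X : ℕ → Ω → ℝ}

lemma ae_summable_of_summable_integral (hX : ∀ k, Measurable (X k)) (h0 : ∀ k ω, 0 ≤ X k ω)
    (hint : ∀ k, Integrable (X k) μ) (hs : Summable fun k => ∫ ω, X k ω ∂μ) :
    ∀ᵐ ω ∂μ, Summable fun k => X k ω := by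
  have hlint : ∫⁻ ω, ∑' k, ENNReal.ofReal (X k ω) ∂μ ≠ ⊤ := by
    rw [lintegral_tsum fun k => (hX k).ennreal_ofReal.aemeasurable]
    simp_rw [← ofReal_integral_eq_lintegral_ofReal (hint _) (ae_of_all _ (h0 _))]
    rw [← ENNReal.ofReal_tsum_of_nonneg (fun k => integral_nonneg (h0 k)) hs]
    exact ENNReal.ofReal_ne_top
  filter_upwards [ae_lt_top (Measurable.tsum fun k => (hX k).ennreal_ofReal) hlint] with ω hω
  exact (ENNReal.summable_toReal hω.ne).congr fun k => ENNReal.toReal_ofReal (h0 k ω)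

lemma integral_exp_neg_sum (hind : iIndepFun X μ) (hX : ∀ k, Measurable (X k)) (n : ℕ) :
    ∫ ω, exp (-∑ k ∈ Finset.range n, X k ω) ∂μ = ∏ k ∈ Finset.range n, ∫ ω, exp (-X k ω) ∂μ := by
  have hind' := (hind.comp (fun _ x => exp (-x)) fun _ => by fun_prop).precomp
    (g := ((↑) : Finset.range n → ℕ)) Subtype.val_injective
  simp_rw [← Finset.sum_neg_distrib, Real.exp_sum, ← Finset.prod_coe_sort (Finset.range n)]
  exact hind'.integral_fun_prod_eq_prod_integral fun k =>
    (Real.measurable_exp.comp (hX k).neg).aestronglyMeasurable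

variable [IsProbabilityMeasure μ]

lemma integrable_exp_neg {f : Ω → ℝ} (hf : AEMeasurable f μ) (h0 : ∀ ω, 0 ≤ f ω) :
    Integrable (fun ω => exp (-f ω)) μ :=
  .of_mem_Icc 0 1 (by fun_prop) <| ae_of_all _ fun ω =>
    ⟨(Real.exp_pos _).le, Real.exp_le_one_iff.2 (neg_nonpos.2 (h0 ω))⟩

lemma integral_exp_neg_le {Y : Ω → ℝ} (hY : Measurable Y) (h0 : ∀ ω, 0 ≤ Y ω)
    (h1 : ∀ ω, Y ω ≤ 1) :
    ∫ ω, exp (-Y ω) ∂μ ≤ exp (-((1 - exp (-1)) * ∫ ω, Y ω ∂μ)) := by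
  have hint : Integrable Y μ :=
    .of_mem_Icc 0 1 hY.aemeasurable (ae_of_all _ fun ω => ⟨h0 ω, h1 ω⟩)
  calc ∫ ω, exp (-Y ω) ∂μ ≤ ∫ ω, (1 - (1 - exp (-1)) * Y ω) ∂μ :=
        integral_mono_of_nonneg (ae_of_all _ fun _ => (Real.exp_pos _).le)
          ((integrable_const 1).sub (hint.const_mul _))
          (ae_of_all _ fun ω => Real.exp_neg_le_one_sub_mul (h0 ω) (h1 ω))
    _ = 1 - (1 - exp (-1)) * ∫ ω, Y ω ∂μ := by
        rw [integral_sub (integrable_const 1) (hint.const_mul _), integral_const_mul]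
        simp
    _ ≤ _ := by linarith [Real.add_one_le_exp (-((1 - exp (-1)) * ∫ ω, Y ω ∂μ))]

lemma summable_integral_of_ae_summable (hind : iIndepFun X μ) (hX : ∀ k, Measurable (X k))
    (h0 : ∀ k ω, 0 ≤ X k ω) (h1 : ∀ k ω, X k ω ≤ 1) (hae : ∀ᵐ ω ∂μ, Summable fun k => X k ω) :
    Summable fun k => ∫ ω, X k ω ∂μ := by
  set c := 1 - exp (-1)
  have hc : 0 < c := sub_pos.2 (Real.exp_lt_one_iff.2 neg_one_lt_zero)
  set ε := ∫ ω, exp (-∑' k, X k ω) ∂μ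
  have hε : 0 < ε :=
    integral_exp_pos <| integrable_exp_neg (by fun_prop) fun ω => tsum_nonneg (h0 · ω)
  -- the a.s. finite sum keeps `E[exp (-(X 0 + ⋯ + X (n - 1)))]` away from zero
  have hbound : ∀ n, ε ≤ exp (-(c * ∑ k ∈ Finset.range n, ∫ ω, X k ω ∂μ)) := fun n =>
    calc ε ≤ ∫ ω, exp (-∑ k ∈ Finset.range n, X k ω) ∂μ := by
          refine integral_mono_ae (integrable_exp_neg (by fun_prop) fun ω => tsum_nonneg (h0 · ω))
            (integrable_exp_neg (by fun_prop) fun ω => Finset.sum_nonneg fun k _ => h0 k ω) ?_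
          filter_upwards [hae] with ω hω
          exact Real.exp_le_exp.2 (neg_le_neg (hω.sum_le_tsum _ fun k _ => h0 k ω))
      _ = ∏ k ∈ Finset.range n, ∫ ω, exp (-X k ω) ∂μ := integral_exp_neg_sum hind hX n
      _ ≤ ∏ k ∈ Finset.range n, exp (-(c * ∫ ω, X k ω ∂μ)) :=
          Finset.prod_le_prod (fun k _ => integral_nonneg fun _ => (Real.exp_pos _).le)
            fun k _ => integral_exp_neg_le (hX k) (h0 k) (h1 k)
      _ = _ := by rw [← Real.exp_sum, Finset.mul_sum, ← Finset.sum_neg_distrib]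
  refine summable_of_sum_range_le (c := -log ε / c) (fun k => integral_nonneg (h0 k))
    fun n => ?_
  have := Real.log_le_log hε (hbound n)
  rw [Real.log_exp] at this
  rw [le_div_iff₀ hc]
  linarith

theorem ae_summable_iff_summable_integral_min_one (hind : iIndepFun X μ)
    (hX : ∀ k, Measurable (X k)) (h0 : ∀ k ω, 0 ≤ X k ω) :
    (∀ᵐ ω ∂μ, Summable fun k => X k ω) ↔ Summable fun k => ∫ ω, min (X k ω) 1 ∂μ := by
  have hY (k : ℕ) : Measurable fun ω => min (X k ω) 1 := (hX k).min measurable_const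
  have hY0 (k : ℕ) (ω : Ω) : 0 ≤ min (X k ω) 1 := le_min (h0 k ω) zero_le_one
  refine ⟨fun hae => summable_integral_of_ae_summable
      (hind.comp (fun _ x => min x 1) fun _ => by fun_prop) hY hY0 (fun _ _ => min_le_right _ _)
      (hae.mono fun ω hω => (summable_min_one_iff (h0 · ω)).2 hω),
    fun hs => ?_⟩
  filter_upwards [ae_summable_of_summable_integral hY hY0
    (fun k => integrable_min_one (hX k) (h0 k)) hs] with ω hω
  exact (summable_min_one_iff (h0 · ω)).1 hω

end UnitIntervalSeries

theorem Finset.measurable_inf' {ι δ α : Type*} [MeasurableSpace δ] [MeasurableSpace α]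
    [SemilatticeInf α] [MeasurableInf₂ α] {s : Finset ι} (hs : s.Nonempty) {f : ι → δ → α}
    (hf : ∀ n ∈ s, Measurable (f n)) : Measurable (s.inf' hs f) :=
  Finset.inf'_induction hs _ (fun _f hf _g hg => hf.inf hg) fun n hn => hf n hn

section BlockMinima

variable {Ω : Type*} [MeasurableSpace Ω] {μ : Measure Ω}

lemma ProbabilityTheory.iIndepFun.curry {ι κ 𝓧 : Type*} [MeasurableSpace 𝓧]
    {X : ι → κ → Ω → 𝓧} (hX : ∀ i j, Measurable (X i j))
    (h : iIndepFun (fun p : ι × κ => X p.1 p.2) μ) : iIndepFun (fun i ω j => X i j ω) μ := by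
  have := h.isProbabilityMeasure
  have (i : ι) (j : κ) : IsProbabilityMeasure (μ.map (X i j)) :=
    Measure.isProbabilityMeasure_map (hX i j).aemeasurable
  have hrow (i : ι) : iIndepFun (X i) μ := h.precomp (g := Prod.mk i) (Prod.mk_right_injective i)
  rw [iIndepFun_iff_map_fun_eq_infinitePi_map fun i => measurable_pi_lambda _ (hX i)]
  have hcurry : (fun ω i j => X i j ω) = MeasurableEquiv.curry ι κ 𝓧 ∘ fun ω p => X p.1 p.2 ω :=
    rfl
  have hjoint : μ.map (fun ω (p : ι × κ) => X p.1 p.2 ω) =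
      Measure.infinitePi fun p : ι × κ => μ.map (X p.1 p.2) :=
    (iIndepFun_iff_map_fun_eq_infinitePi_map fun p : ι × κ => hX p.1 p.2).1 h
  rw [hcurry, ← Measure.map_map (MeasurableEquiv.measurable _)
    (measurable_pi_lambda _ fun p => hX _ _), hjoint,
    Measure.infinitePi_map_curry fun i j => μ.map (X i j)]
  congr 1
  funext i
  exact ((iIndepFun_iff_map_fun_eq_infinitePi_map (hX i)).1 (hrow i)).symm

lemma iIndepFun_inf' {ι κ : Type*} {L : ι → κ → Ω → ℝ} (hL : ∀ i j, Measurable (L i j))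
    (hind : iIndepFun (fun p : ι × κ => L p.1 p.2) μ) (s : ι → Finset κ)
    (hs : ∀ i, (s i).Nonempty) : iIndepFun (fun i ω => (s i).inf' (hs i) fun j => L i j ω) μ := by
  have hrows : iIndepFun (β := fun _ => κ → ℝ) (fun i ω j => L i j ω) μ := hind.curry hL
  refine hrows.comp (fun i (v : κ → ℝ) => (s i).inf' (hs i) v) fun i => ?_
  convert Finset.measurable_inf' (f := fun j (v : κ → ℝ) => v j) (hs i) fun j _ =>
    measurable_pi_apply j using 1
  ext v
  rw [Finset.inf'_apply]

lemma measureReal_lt_inf' {ι : Type*} {X : ι → Ω → ℝ} (hind : iIndepFun X μ)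
    (hX : ∀ i, Measurable (X i)) {ν : Measure ℝ} [IsProbabilityMeasure ν]
    (hid : ∀ i, μ.map (X i) = ν) (s : Finset ι) (hs : s.Nonempty) (t : ℝ) :
    μ.real {ω | t < s.inf' hs fun i => X i ω} = (1 - cdf ν t) ^ s.card := by
  have hset : {ω | t < s.inf' hs fun i => X i ω} = ⋂ i ∈ s, X i ⁻¹' Ioi t := by
    ext ω
    simp [Finset.lt_inf'_iff]
  have hi (i : ι) : μ (X i ⁻¹' Ioi t) = ν (Ioi t) := by
    rw [← hid i, Measure.map_apply (hX i) measurableSet_Ioi]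
  rw [measureReal_def, hset, hind.measure_inter_preimage_eq_mul s fun _ _ => measurableSet_Ioi]
  simp only [hi, Finset.prod_const, ENNReal.toReal_pow]
  rw [← measureReal_def, ← compl_Iic, probReal_compl_eq_one_sub measurableSet_Iic, cdf_eq_real]

variable [IsProbabilityMeasure μ] {ν : Measure ℝ} [IsProbabilityMeasure ν]

theorem summable_integral_min_one_iff_integrableOn_quantile {X : ℕ → Ω → ℝ}
    (hX : ∀ k, Measurable (X k)) (h0 : ∀ k ω, 0 ≤ X k ω) (hν : ν (Iio 0) = 0) {n : ℕ → ℕ}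
    (htail : ∀ k t, μ.real {ω | t < X k ω} = (1 - cdf ν t) ^ n k) (hn2 : ∀ k, 2 ≤ n k)
    {a₁ δ₁ a₂ δ₂ : ℝ} (hδ₁ : 0 < δ₁) (hδ₂ : 0 < δ₂)
    (hlow : ∀ k : ℕ, exp (a₁ + δ₁ * k) ≤ log (n k))
    (hup : ∀ k : ℕ, log (n k) ≤ exp (a₂ + δ₂ * k)) :
    (Summable fun k => ∫ ω, min (X k ω) 1 ∂μ) ↔
      IntegrableOn (fun y => quantile ν (exp (-exp y))) (Ioi 0) :=
  ⟨integrableOn_quantile_of_summable hν (fun k _ hq hnq =>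
      min_quantile_one_le_two_mul_integral (hX k) (h0 k) (htail k) hq hnq) hn2 hδ₂ hup,
    summable_of_integrableOn_quantile hν
      (fun k => integral_nonneg fun ω => le_min (h0 k ω) zero_le_one)
      (fun k _ hq hq1 => integral_min_one_le_quantile_add (hX k) (h0 k) (htail k) hν hq hq1)
      hδ₁ hlow⟩

theorem ae_summable_inf'_iff_lintegral_quantile_lt_top {L : ℕ → ℕ → Ω → ℝ}
    (hL : ∀ k j, Measurable (L k j)) (hL0 : ∀ k j ω, 0 ≤ L k j ω)
    (hind : iIndepFun (fun p : ℕ × ℕ => L p.1 p.2) μ) (hid : ∀ k j, μ.map (L k j) = ν)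
    (s : ℕ → Finset ℕ) (hs : ∀ k, (s k).Nonempty) (hs2 : ∀ k, 2 ≤ (s k).card)
    {a₁ δ₁ a₂ δ₂ : ℝ} (hδ₁ : 0 < δ₁) (hδ₂ : 0 < δ₂)
    (hlow : ∀ k : ℕ, exp (a₁ + δ₁ * k) ≤ log (s k).card)
    (hup : ∀ k : ℕ, log (s k).card ≤ exp (a₂ + δ₂ * k)) :
    (∀ᵐ ω ∂μ, Summable fun k => (s k).inf' (hs k) fun j => L k j ω) ↔
      (∫⁻ y in Ici 0, ENNReal.ofReal (quantile ν (exp (-exp y)))) < ⊤ := by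
  have hν : ν (Iio 0) = 0 := by
    rw [← hid 0 0, Measure.map_apply (hL 0 0) measurableSet_Iio,
      show L 0 0 ⁻¹' Iio 0 = ∅ from eq_empty_of_forall_notMem fun ω hω => (hL0 0 0 ω).not_gt hω,
      measure_empty]
  have hX (k : ℕ) : Measurable fun ω => (s k).inf' (hs k) fun j => L k j ω := by
    simpa only [← Finset.inf'_apply] using Finset.measurable_inf' (hs k) fun j _ => hL k j
  have hX0 (k : ℕ) (ω : Ω) : 0 ≤ (s k).inf' (hs k) fun j => L k j ω :=
    Finset.le_inf' _ _ fun j _ => hL0 k j ω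
  have htail (k : ℕ) (t : ℝ) := measureReal_lt_inf'
    (hind.precomp (g := Prod.mk k) (Prod.mk_right_injective k)) (hL k) (hid k) (s k) (hs k) t
  rw [ae_summable_iff_summable_integral_min_one (iIndepFun_inf' hL hind s hs) hX hX0,
    lintegral_quantile_exp_neg_exp_lt_top_iff hν]
  exact summable_integral_min_one_iff_integrableOn_quantile hX hX0 hν htail hs2 hδ₁ hδ₂ hlow hup

end BlockMinima

lemma mul_pow_succ_eq_exp {β c : ℝ} (hβ : 0 < β) (hc : 0 < c) (k : ℕ) :
    β * c ^ (k + 1) = exp (log β + log c + log c * k) := by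
  rw [Real.exp_add, Real.exp_add, Real.exp_log hβ, Real.exp_log hc, mul_comm (log c),
    Real.exp_nat_mul, Real.exp_log hc, pow_succ]
  ring

lemma exp_le_log_of_exp_mul_pow_le {β c x : ℝ} (hβ : 0 < β) (hc : 0 < c) (hx : 0 < x) {k : ℕ}
    (h : exp (β * c ^ (k + 1)) ≤ x) :
    exp (log β + log c + log c * k) ≤ log x := by
  rwa [← mul_pow_succ_eq_exp hβ hc, Real.le_log_iff_exp_le hx]

lemma log_le_exp_of_le_exp_mul_pow {β c x : ℝ} (hβ : 0 < β) (hc : 0 < c) (hx : 0 < x) {k : ℕ}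
    (h : x ≤ exp (β * c ^ (k + 1))) :
    log x ≤ exp (log β + log c + log c * k) := by
  rwa [← mul_pow_succ_eq_exp hβ hc, Real.log_le_iff_le_exp hx]

/-- **Explosive criterion (Claim 5.3 + Lemma 5.4).** For i.i.d. nonnegative
`(L_{k,j})` with common law `ν` (CDF `F(t) = ν(-∞,t]`, generalized inverse
`F^{(-1)}(q) = inf{t : F(t) ≥ q}`) and positive integers `(b_k)_{k ≥ 1}` growing
double-exponentially, `∑_{k ≥ 1} min_{1 ≤ j ≤ b_k} L_{k,j} < ∞` almost surely iff
`∫_0^∞ F^{(-1)}(exp(-e^y)) dy < ∞`. -/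
theorem stmt19 {Ω : Type*} [MeasurableSpace Ω] (μ : Measure Ω) [IsProbabilityMeasure μ]
    (L : ℕ → ℕ → Ω → ℝ) (hmeas : ∀ k j, Measurable (L k j))
    (hnonneg : ∀ k j ω, 0 ≤ L k j ω)
    (hindep : iIndepFun (fun p : ℕ × ℕ => L p.1 p.2) μ)
    (ν : Measure ℝ) [IsProbabilityMeasure ν]
    (hid : ∀ k j, Measure.map (L k j) μ = ν)
    (b : ℕ → ℕ) (hbpos : ∀ k, 0 < b k)
    (b₁ b₂ c₁ c₂ : ℝ) (hb₁ : 0 < b₁) (hb₂ : 0 < b₂) (hc₁ : 1 < c₁) (hc₁₂ : c₁ ≤ c₂)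
    (hgrow : ∀ k : ℕ, 1 ≤ k →
      Real.exp (b₁ * c₁ ^ k) ≤ (b k : ℝ) ∧ (b k : ℝ) ≤ Real.exp (b₂ * c₂ ^ k)) :
    (∀ᵐ ω ∂μ, Summable (fun k : ℕ =>
        (Finset.Icc 1 (b (k + 1))).inf' (Finset.nonempty_Icc.mpr (hbpos (k + 1)))
          (fun j => L (k + 1) j ω))) ↔
      (∫⁻ y in Set.Ici (0 : ℝ), ENNReal.ofReal
          (sInf {t : ℝ | Real.exp (-Real.exp y) ≤ (ν (Set.Iic t)).toReal})) < ⊤ := by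
  have hc₁0 : 0 < c₁ := zero_lt_one.trans hc₁
  have hgrow' (k : ℕ) : exp (b₁ * c₁ ^ (k + 1)) ≤ (Finset.Icc 1 (b (k + 1))).card ∧
      ((Finset.Icc 1 (b (k + 1))).card : ℝ) ≤ exp (b₂ * c₂ ^ (k + 1)) := by
    simpa using hgrow (k + 1) k.succ_pos
  have hs2 (k : ℕ) : 2 ≤ (Finset.Icc 1 (b (k + 1))).card := by
    have : (1 : ℝ) < (Finset.Icc 1 (b (k + 1))).card :=
      (Real.one_lt_exp_iff.2 (by positivity)).trans_le (hgrow' k).1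
    exact_mod_cast this
  have hcard (k : ℕ) : (0 : ℝ) < (Finset.Icc 1 (b (k + 1))).card := by
    have := hs2 k
    positivity
  have hind : iIndepFun (fun p : ℕ × ℕ => L (p.1 + 1) p.2) μ :=
    hindep.precomp (g := fun p : ℕ × ℕ => (p.1 + 1, p.2)) fun p q h => by
      simpa [Prod.ext_iff] using h
  simpa only [quantile, cdf_eq_real, measureReal_def] using
    ae_summable_inf'_iff_lintegral_quantile_lt_top (fun k j => hmeas _ _) (fun k j => hnonneg _ _)
      hind (fun k j => hid _ _) _ _ hs2 (Real.log_pos hc₁) (Real.log_pos (hc₁.trans_le hc₁₂))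
      (fun k => exp_le_log_of_exp_mul_pow_le hb₁ hc₁0 (hcard k) (hgrow' k).1)
      (fun k => log_le_exp_of_le_exp_mul_pow hb₂ (hc₁0.trans_le hc₁₂) (hcard k) (hgrow' k).2)
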